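/- For a finite graph G with n vertices and maximum degree at most d, the bubble width, path width, and tree width of G satisfy: TW(G) ≤ PW(G) ≤ 2·BW(G) ≤ 2d·PW(G) ≤ O(d·log n)·TW(G). In particular, for bounded-degree graphs the three parameters are equal up to a factor of O(log n). -/

import Mathlib

/-!
A path decomposition is a tree decomposition along a path, so `TW ≤ PW`. For a vertex ordering,
the endpoints of the edges crossing the successive prefix cuts form a path decomposition whose bags
have at most twice the size of the cuts, so `PW ≤ 2·BW`. Conversely, if the vertices are listed by
the first bag containing them, every edge leaving a prefix starts in one and the same bag, so with
degrees at most `d` the cuts have at most `d·PW` edges. Finally, the bag at a centroid of the tree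
splits the remaining vertices into branches holding at most half of them each; recursing into the
branches, concatenating their path decompositions and adding the centroid bag to every bag gives
recursion depth `log₂ n + 1`, hence `PW ≤ (log₂ n + 1)·TW`.
-/

/-- Number of edges of `G` with exactly one endpoint in `S`
(counted as ordered pairs with the first coordinate in `S`). -/
noncomputable def cutSize {V : Type*} (G : SimpleGraph V) (S : Set V) : ℕ :=
  {p : V × V | G.Adj p.1 p.2 ∧ p.1 ∈ S ∧ p.2 ∉ S}.ncard

/-- The prefix `{b 0, …, b i}` of an ordering of the vertices. -/
def prefixSet {V : Type*} [Fintype V] (b : Fin (Fintype.card V) ≃ V)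
    (i : Fin (Fintype.card V)) : Set V :=
  {v | ∃ j, j ≤ i ∧ b j = v}

/-- The width of a bubbling (vertex ordering): max size of a prefix cut. -/
noncomputable def ordWidth {V : Type*} [Fintype V] (G : SimpleGraph V)
    (b : Fin (Fintype.card V) ≃ V) : ℕ :=
  Finset.univ.sup fun i => cutSize G (prefixSet b i)

/-- The bubble width of a finite graph. -/
noncomputable def bubbleWidth {V : Type*} [Fintype V] (G : SimpleGraph V) : ℕ :=
  sInf (Set.range (ordWidth G))


/-- A path decomposition of `G`. -/
structure PathDecomp {V : Type*} (G : SimpleGraph V) where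
  m : ℕ
  bag : Fin m → Set V
  cover : ∀ ⦃u v⦄, G.Adj u v → ∃ i, u ∈ bag i ∧ v ∈ bag i
  interval : ∀ v (i j k : Fin m), i ≤ j → j ≤ k → v ∈ bag i → v ∈ bag k → v ∈ bag j

/-- The width of a path decomposition: the maximal bag size. -/
noncomputable def PathDecomp.width {V : Type*} {G : SimpleGraph V} (D : PathDecomp G) : ℕ :=
  Finset.univ.sup fun i => (D.bag i).ncard

/-- The path width of a finite graph. -/
noncomputable def pathWidth {V : Type*} (G : SimpleGraph V) : ℕ :=
  sInf (Set.range (PathDecomp.width (G := G)))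


/-- A tree decomposition of `G`. -/
structure TreeDecomp {V : Type*} (G : SimpleGraph V) where
  m : ℕ
  T : SimpleGraph (Fin m)
  isTree : T.IsTree
  bag : Fin m → Set V
  cover : ∀ ⦃u v⦄, G.Adj u v → ∃ i, u ∈ bag i ∧ v ∈ bag i
  pathCond : ∀ v (i j : Fin m) (p : T.Walk i j), p.IsPath →
    v ∈ bag i → v ∈ bag j → ∀ k ∈ p.support, v ∈ bag k

noncomputable def TreeDecomp.width {V : Type*} {G : SimpleGraph V} (D : TreeDecomp G) : ℕ :=
  Finset.univ.sup fun i => (D.bag i).ncard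

/-- The tree width of a finite graph. -/
noncomputable def treeWidth {V : Type*} (G : SimpleGraph V) : ℕ :=
  sInf (Set.range (TreeDecomp.width (G := G)))

namespace SimpleGraph

lemma pathGraph_mem_edges_of_le {n : ℕ} {a b v w : Fin n} (p : (pathGraph n).Walk a b)
    (hvw : (v : ℕ) + 1 = w) (hav : a ≤ v) (hwb : w ≤ b) : s(v, w) ∈ p.edges := by
  induction p with
  | nil => simp only [Fin.le_def] at hav hwb; omega
  | @cons x y c h q ih =>
    rw [Walk.edges_cons, List.mem_cons]
    rcases le_or_gt y v with hyv | hvy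
    · exact Or.inr (ih hyv hwb)
    · left
      rw [pathGraph_adj] at h
      simp only [Fin.le_def, Fin.lt_def] at hav hvy
      rw [show x = v from Fin.ext (by omega), show y = w from Fin.ext (by omega)]

lemma pathGraph_isAcyclic (n : ℕ) : (pathGraph n).IsAcyclic := by
  rw [isAcyclic_iff_forall_adj_isBridge]
  intro v w h
  rw [isBridge_iff_forall_walk_mem_edges]
  intro p
  rcases pathGraph_adj.1 h with h | h
  · exact pathGraph_mem_edges_of_le p h le_rfl le_rfl
  · simpa [Sym2.eq_swap] using pathGraph_mem_edges_of_le p.reverse h le_rfl le_rfl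

lemma pathGraph_isTree (n : ℕ) : (pathGraph (n + 1)).IsTree :=
  ⟨pathGraph_connected n, pathGraph_isAcyclic _⟩

lemma pathGraph_le_of_mem_support {n : ℕ} {a b k : Fin n} {p : (pathGraph n).Walk a b}
    (hp : p.IsPath) (hk : k ∈ p.support) : a ≤ k ∧ k ≤ b ∨ b ≤ k ∧ k ≤ a := by
  induction p with
  | nil => simp_all
  | @cons x y c h q ih =>
    rw [Walk.cons_isPath_iff] at hp
    rw [Walk.support_cons, List.mem_cons] at hk
    have hk' := hk.imp_right (ih hp.1)
    simp only [Fin.le_def] at hk' ⊢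
    -- `q` must not cross back over `x`
    rcases pathGraph_adj.1 h with hxy | hyx
    · have hyc : (y : ℕ) ≤ c := by
        by_contra! hcy
        have he := pathGraph_mem_edges_of_le q.reverse hxy (Fin.le_def.2 (by omega)) le_rfl
        exact hp.2 (by simpa using Walk.fst_mem_support_of_mem_edges _ he)
      rcases hk' with rfl | hk' <;> omega
    · have hcy : (c : ℕ) ≤ y := by
        by_contra! hyc
        have he := pathGraph_mem_edges_of_le q hyx le_rfl (Fin.le_def.2 (by omega))
        exact hp.2 (Walk.snd_mem_support_of_mem_edges _ he)
      rcases hk' with rfl | hk' <;> omega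

variable {α : Type*} {T : SimpleGraph α}

/-- In a tree, the component of `T - c` containing the neighbour `y` of `c` (empty if `y` is not a
neighbour of `c`). -/
def branch (T : SimpleGraph α) (c y : α) : Set α :=
  {z | T.Adj c y ∧ T.dist y z < T.dist c z}

namespace IsTree

variable {c y z : α}

lemma dist_eq_of_mem_branch (hT : T.IsTree) (hz : z ∈ T.branch c y) :
    T.dist c z = T.dist y z + 1 := by
  have := hT.dist_eq_dist_add_one_of_adj z hz.1
  rw [dist_comm, dist_comm (u := z)] at this
  have := hz.2
  omega

lemma dist_eq_of_not_mem_branch (hT : T.IsTree) (h : T.Adj c y) (hz : z ∉ T.branch c y) :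
    T.dist y z = T.dist c z + 1 := by
  have := hT.dist_eq_dist_add_one_of_adj z h
  rw [dist_comm, dist_comm (u := z)] at this
  have : ¬ T.dist y z < T.dist c z := fun hlt => hz ⟨h, hlt⟩
  omega

lemma exists_mem_branch (hT : T.IsTree) (hz : z ≠ c) : ∃ y, z ∈ T.branch c y := by
  obtain ⟨p, -, hp⟩ := hT.connected.exists_path_of_dist c z
  cases p with
  | nil => exact absurd rfl hz
  | cons h q =>
    refine ⟨_, h, ?_⟩
    have := dist_le q
    rw [Walk.length_cons] at hp
    omega

lemma eq_of_mem_branch (hT : T.IsTree) {y' : α} (hy : z ∈ T.branch c y)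
    (hy' : z ∈ T.branch c y') : y = y' := by
  -- both `y` and `y'` start a shortest path from `c` to `z`, and there is only one path
  obtain ⟨q, -, hq⟩ := hT.connected.exists_path_of_dist y z
  obtain ⟨q', -, hq'⟩ := hT.connected.exists_path_of_dist y' z
  have hp : (Walk.cons hy.1 q).IsPath := Walk.isPath_of_length_eq_dist _ <| by
    rw [Walk.length_cons, hq, hT.dist_eq_of_mem_branch hy]
  have hp' : (Walk.cons hy'.1 q').IsPath := Walk.isPath_of_length_eq_dist _ <| by
    rw [Walk.length_cons, hq', hT.dist_eq_of_mem_branch hy']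
  simpa using congrArg Walk.snd ((hT.existsUnique_path c z).unique hp hp')

lemma mem_branch_of_adj (hT : T.IsTree) {a b : α} (ha : a ∈ T.branch c y) (hab : T.Adj a b)
    (hb : b ≠ c) : b ∈ T.branch c y := by
  have hd : T.dist a b = 1 := dist_eq_one_iff_adj.2 hab
  rcases hT.dist_eq_dist_add_one_of_adj c hab with h | h
  · obtain ⟨y', hy'⟩ := hT.exists_mem_branch hb
    have hdist : T.dist y' a ≤ T.dist y' b + T.dist b a := hT.connected.dist_triangle
    rw [dist_comm (u := b), hd] at hdist
    have : a ∈ T.branch c y' := ⟨hy'.1, by have := hy'.2; omega⟩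
    rwa [hT.eq_of_mem_branch ha this]
  · have hdist : T.dist y b ≤ T.dist y a + T.dist a b := hT.connected.dist_triangle
    exact ⟨ha.1, by have := ha.2; omega⟩

lemma mem_support_of_mem_branch (hT : T.IsTree) {a b : α} (p : T.Walk a b) (ha : a ∈ T.branch c y)
    (hb : b ∉ T.branch c y) : c ∈ p.support := by
  induction p with
  | nil => exact absurd ha hb
  | @cons u v w h q ih =>
    rw [Walk.support_cons, List.mem_cons]
    by_cases hv : v = c
    · exact Or.inr (hv ▸ q.start_mem_support)
    · exact Or.inr (ih (hT.mem_branch_of_adj ha h hv) hb)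

open Classical in
theorem exists_centroid (hT : T.IsTree) {ι : Type*} (s : Finset ι) (f : ι → α) :
    ∃ c, ∀ y, 2 * (s.filter (f · ∈ T.branch c y)).card ≤ s.card := by
  have : Nonempty α := hT.connected.nonempty
  let Φ : α → ℕ := fun z => ∑ i ∈ s, T.dist z (f i)
  refine ⟨Function.argmin Φ, fun y => ?_⟩
  set c := Function.argmin Φ
  by_cases h : T.Adj c y
  · -- stepping from `c` to `y` brings the points of the branch closer and all others farther
    have key : Φ y + 2 * (s.filter (f · ∈ T.branch c y)).card = Φ c + s.card := by
      rw [Finset.card_filter, Finset.card_eq_sum_ones s, Finset.mul_sum,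
        ← Finset.sum_add_distrib, ← Finset.sum_add_distrib]
      refine Finset.sum_congr rfl fun i _ => ?_
      split_ifs with hi
      · have := hT.dist_eq_of_mem_branch hi
        omega
      · have := hT.dist_eq_of_not_mem_branch h hi
        omega
    have : Φ c ≤ Φ y := Function.argmin_le Φ y
    omega
  · have : ∀ i, f i ∉ T.branch c y := fun i hi => h hi.1
    simp [this]

end IsTree

end SimpleGraph

namespace PathDecomp

variable {V : Type*} {G : SimpleGraph V} (D : PathDecomp G)

lemma ncard_bag_le_width (i : Fin D.m) : (D.bag i).ncard ≤ D.width :=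
  Finset.le_sup (f := fun i => (D.bag i).ncard) (Finset.mem_univ i)

lemma width_le_iff {k : ℕ} : D.width ≤ k ↔ ∀ i, (D.bag i).ncard ≤ k := by
  simp [width]

lemma pathWidth_le : pathWidth G ≤ D.width :=
  Nat.sInf_le ⟨D, rfl⟩

instance : Nonempty (PathDecomp G) :=
  ⟨⟨1, fun _ => Set.univ, fun _ _ _ => ⟨0, trivial, trivial⟩, fun _ _ _ _ _ _ _ _ => trivial⟩⟩

lemma exists_width_eq (G : SimpleGraph V) : ∃ D : PathDecomp G, D.width = pathWidth G :=
  Nat.sInf_mem (Set.range_nonempty _)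

/-- The bags indexed by `ℕ`, empty beyond the last one. -/
def bagAt (j : ℕ) : Set V := {v | ∃ h : j < D.m, v ∈ D.bag ⟨j, h⟩}

lemma mem_bagAt_of_le {v : V} {i j k : ℕ} (hij : i ≤ j) (hjk : j ≤ k) (hi : v ∈ D.bagAt i)
    (hk : v ∈ D.bagAt k) : v ∈ D.bagAt j := by
  obtain ⟨hi, hvi⟩ := hi
  obtain ⟨hk, hvk⟩ := hk
  exact ⟨by omega, D.interval v _ _ _ (Fin.mk_le_mk.2 hij) (Fin.mk_le_mk.2 hjk) hvi hvk⟩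

lemma ncard_bagAt_le_width (j : ℕ) : (D.bagAt j).ncard ≤ D.width := by
  by_cases h : j < D.m
  · have : D.bagAt j = D.bag ⟨j, h⟩ := by ext; simp [bagAt, h]
    exact this ▸ D.ncard_bag_le_width _
  · have : D.bagAt j = ∅ := by ext; simp [bagAt, h]
    simp [this]

lemma exists_mem_bagAt_of_adj {u v : V} (h : G.Adj u v) : ∃ j, u ∈ D.bagAt j ∧ v ∈ D.bagAt j :=
  let ⟨i, hu, hv⟩ := D.cover h
  ⟨i, ⟨i.2, hu⟩, ⟨i.2, hv⟩⟩

/-- The index of the first bag containing `v` (`0` if there is none). -/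
noncomputable def firstBag (v : V) : ℕ := sInf {j | v ∈ D.bagAt j}

lemma firstBag_le {v : V} {j : ℕ} (h : v ∈ D.bagAt j) : D.firstBag v ≤ j :=
  Nat.sInf_le h

lemma mem_bagAt_of_firstBag_le {v : V} {j k : ℕ} (h : v ∈ D.bagAt j) (hk : D.firstBag v ≤ k)
    (hkj : k ≤ j) : v ∈ D.bagAt k :=
  D.mem_bagAt_of_le hk hkj (Nat.sInf_mem (s := {j | v ∈ D.bagAt j}) ⟨j, h⟩) h

/-- The tree decomposition along a path, padded with an empty bag so that the path is nonempty. -/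
def toTreeDecomp : TreeDecomp G where
  m := D.m + 1
  T := SimpleGraph.pathGraph (D.m + 1)
  isTree := SimpleGraph.pathGraph_isTree D.m
  bag i := D.bagAt i
  cover _ _ h :=
    let ⟨i, hu, hv⟩ := D.cover h
    ⟨i.castSucc, ⟨i.2, hu⟩, ⟨i.2, hv⟩⟩
  pathCond v i j p hp hi hj k hk := by
    rcases SimpleGraph.pathGraph_le_of_mem_support hp hk with ⟨hik, hkj⟩ | ⟨hjk, hki⟩
    · exact D.mem_bagAt_of_le hik hkj hi hj
    · exact D.mem_bagAt_of_le hjk hki hj hi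

lemma width_toTreeDecomp_le : D.toTreeDecomp.width ≤ D.width :=
  Finset.sup_le fun i _ => D.ncard_bagAt_le_width i

end PathDecomp

namespace TreeDecomp

variable {V : Type*} {G : SimpleGraph V} (D : TreeDecomp G)

lemma ncard_bag_le_width (i : Fin D.m) : (D.bag i).ncard ≤ D.width :=
  Finset.le_sup (f := fun i => (D.bag i).ncard) (Finset.mem_univ i)

lemma treeWidth_le : treeWidth G ≤ D.width :=
  Nat.sInf_le ⟨D, rfl⟩

instance : Nonempty (TreeDecomp G) :=
  ⟨(Classical.arbitrary (PathDecomp G)).toTreeDecomp⟩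

lemma exists_width_eq (G : SimpleGraph V) : ∃ D : TreeDecomp G, D.width = treeWidth G :=
  Nat.sInf_mem (Set.range_nonempty _)

end TreeDecomp

theorem treeWidth_le_pathWidth {V : Type*} (G : SimpleGraph V) : treeWidth G ≤ pathWidth G := by
  obtain ⟨D, hD⟩ := PathDecomp.exists_width_eq G
  calc treeWidth G ≤ D.toTreeDecomp.width := D.toTreeDecomp.treeWidth_le
    _ ≤ D.width := D.width_toTreeDecomp_le
    _ = pathWidth G := hD

section Bubbling

variable {V : Type*} [Fintype V] (G : SimpleGraph V)

lemma mem_prefixSet_iff {b : Fin (Fintype.card V) ≃ V} {i : Fin (Fintype.card V)} {x : V} :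
    x ∈ prefixSet b i ↔ b.symm x ≤ i :=
  ⟨fun ⟨j, hj, hx⟩ => hx ▸ (b.symm_apply_apply j).symm ▸ hj, fun h => ⟨_, h, b.apply_symm_apply x⟩⟩

lemma cutSize_le_ordWidth (b : Fin (Fintype.card V) ≃ V) (i : Fin (Fintype.card V)) :
    cutSize G (prefixSet b i) ≤ ordWidth G b :=
  Finset.le_sup (f := fun i => cutSize G (prefixSet b i)) (Finset.mem_univ i)

lemma bubbleWidth_le (b : Fin (Fintype.card V) ≃ V) : bubbleWidth G ≤ ordWidth G b :=
  Nat.sInf_le ⟨b, rfl⟩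

lemma exists_ordWidth_eq : ∃ b, ordWidth G b = bubbleWidth G :=
  have : Nonempty (Fin (Fintype.card V) ≃ V) := ⟨(Fintype.equivFin V).symm⟩
  Nat.sInf_mem (Set.range_nonempty _)

/-- The endpoints of the edges crossing the cut after position `i`. -/
def crossingBag (b : Fin (Fintype.card V) ≃ V) (i : Fin (Fintype.card V)) : Set V :=
  {v | ∃ x, G.Adj v x ∧ (b.symm v ≤ i ↔ ¬ b.symm x ≤ i)}

lemma ncard_crossingBag_le (b : Fin (Fintype.card V) ≃ V) (i : Fin (Fintype.card V)) :
    (crossingBag G b i).ncard ≤ 2 * cutSize G (prefixSet b i) := by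
  set C := {p : V × V | G.Adj p.1 p.2 ∧ p.1 ∈ prefixSet b i ∧ p.2 ∉ prefixSet b i}
  have hsub : crossingBag G b i ⊆ Prod.fst '' C ∪ Prod.snd '' C := by
    rintro v ⟨x, hvx, hcross⟩
    by_cases hv : b.symm v ≤ i
    · refine Or.inl ⟨(v, x), ⟨hvx, ?_, ?_⟩, rfl⟩ <;> rw [mem_prefixSet_iff]
      exacts [hv, hcross.1 hv]
    · refine Or.inr ⟨(x, v), ⟨hvx.symm, ?_, ?_⟩, rfl⟩ <;> rw [mem_prefixSet_iff]
      exacts [not_not.1 (mt hcross.2 hv), hv]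
  calc (crossingBag G b i).ncard ≤ (Prod.fst '' C ∪ Prod.snd '' C).ncard :=
        Set.ncard_le_ncard hsub
    _ ≤ (Prod.fst '' C).ncard + (Prod.snd '' C).ncard := Set.ncard_union_le _ _
    _ ≤ C.ncard + C.ncard := add_le_add (Set.ncard_image_le) (Set.ncard_image_le)
    _ = 2 * cutSize G (prefixSet b i) := (two_mul _).symm

lemma mem_crossingBag_of_lt {b : Fin (Fintype.card V) ≃ V} {u v : V} (h : G.Adj u v)
    (hlt : b.symm u < b.symm v) :
    u ∈ crossingBag G b (b.symm u) ∧ v ∈ crossingBag G b (b.symm u) :=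
  ⟨⟨v, h, by simpa using hlt⟩, ⟨u, h.symm, by simpa using hlt⟩⟩

def crossingDecomp (b : Fin (Fintype.card V) ≃ V) : PathDecomp G where
  m := Fintype.card V
  bag := crossingBag G b
  cover u v h := by
    rcases lt_or_gt_of_ne (b.symm.injective.ne (G.ne_of_adj h)) with hlt | hlt
    · exact ⟨_, mem_crossingBag_of_lt G h hlt⟩
    · exact ⟨_, (mem_crossingBag_of_lt G h.symm hlt).symm⟩
  interval v i j k hij hjk := by
    rintro ⟨x, hvx, hx⟩ ⟨y, hvy, hy⟩
    -- an edge at `v` crossing the cut at `k` (if `v` is left of `j`) or at `i` (otherwise) also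
    -- crosses the cut at `j`
    by_cases hv : b.symm v ≤ j
    · have hyk : ¬ b.symm y ≤ k := hy.1 (hv.trans hjk)
      exact ⟨y, hvy, iff_of_true hv fun hyj => hyk (hyj.trans hjk)⟩
    · have hxi : b.symm x ≤ i := not_not.1 (mt hx.2 fun hvi => hv (hvi.trans hij))
      exact ⟨x, hvx, iff_of_false hv (not_not.2 (hxi.trans hij))⟩

lemma pathWidth_le_two_mul_ordWidth (b : Fin (Fintype.card V) ≃ V) :
    pathWidth G ≤ 2 * ordWidth G b :=
  (crossingDecomp G b).pathWidth_le.trans <| (PathDecomp.width_le_iff _).2 fun i =>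
    (ncard_crossingBag_le G b i).trans (Nat.mul_le_mul_left 2 (cutSize_le_ordWidth G b i))

theorem pathWidth_le_two_mul_bubbleWidth : pathWidth G ≤ 2 * bubbleWidth G := by
  obtain ⟨b, hb⟩ := exists_ordWidth_eq G
  exact hb ▸ pathWidth_le_two_mul_ordWidth G b

end Bubbling

lemma ncard_adj_pairs_le {V : Type*} [Fintype V] {G : SimpleGraph V} {d : ℕ}
    (hdeg : ∀ v, (G.neighborSet v).ncard ≤ d) (B : Set V) :
    {p : V × V | p.1 ∈ B ∧ G.Adj p.1 p.2}.ncard ≤ B.ncard * d := by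
  classical
  have hB : {p : V × V | p.1 ∈ B ∧ G.Adj p.1 p.2} =
      ⋃ u ∈ B.toFinset, Prod.mk u '' G.neighborSet u := by
    ext ⟨u, v⟩
    simp [and_comm]
  calc _ ≤ ∑ u ∈ B.toFinset, (Prod.mk u '' G.neighborSet u).ncard :=
        hB ▸ Finset.set_ncard_biUnion_le _ _
    _ ≤ B.toFinset.card • d :=
        Finset.sum_le_card_nsmul _ _ _ fun u _ => (Set.ncard_image_le).trans (hdeg u)
    _ = B.ncard * d := by rw [smul_eq_mul, Set.ncard_eq_toFinset_card']

lemma exists_equiv_monotone_comp {V β : Type*} [Fintype V] [LinearOrder β] (f : V → β) :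
    ∃ b : Fin (Fintype.card V) ≃ V, Monotone (f ∘ b) :=
  let e := (Fintype.equivFin V).symm
  ⟨(Tuple.sort (f ∘ e)).trans e, Tuple.monotone_sort (f ∘ e)⟩

namespace PathDecomp

variable {V : Type*} [Fintype V] {G : SimpleGraph V} (D : PathDecomp G)

/-- Listing the vertices by their first bag, every edge leaving a prefix starts in the first bag of
the last vertex of the prefix. -/
lemma ordWidth_le {d : ℕ} (hdeg : ∀ v, (G.neighborSet v).ncard ≤ d) {b : Fin (Fintype.card V) ≃ V}
    (hb : Monotone (D.firstBag ∘ b)) : ordWidth G b ≤ D.width * d := by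
  refine Finset.sup_le fun i _ => ?_
  calc cutSize G (prefixSet b i)
      ≤ {p : V × V | p.1 ∈ D.bagAt (D.firstBag (b i)) ∧ G.Adj p.1 p.2}.ncard := by
        refine Set.ncard_le_ncard ?_
        rintro ⟨u, v⟩ ⟨huv, hu, hv⟩
        rw [mem_prefixSet_iff] at hu hv
        obtain ⟨j, huj, hvj⟩ := D.exists_mem_bagAt_of_adj huv
        have hfu : D.firstBag u ≤ D.firstBag (b i) := by simpa using hb hu
        have hfv : D.firstBag (b i) ≤ D.firstBag v := by simpa using hb (not_le.1 hv).le
        exact ⟨D.mem_bagAt_of_firstBag_le huj hfu (hfv.trans (D.firstBag_le hvj)), huv⟩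
    _ ≤ (D.bagAt (D.firstBag (b i))).ncard * d := ncard_adj_pairs_le hdeg _
    _ ≤ D.width * d := Nat.mul_le_mul_right d (D.ncard_bagAt_le_width _)

end PathDecomp

theorem bubbleWidth_le_mul_pathWidth {V : Type*} [Fintype V] (G : SimpleGraph V) {d : ℕ}
    (hdeg : ∀ v, (G.neighborSet v).ncard ≤ d) : bubbleWidth G ≤ d * pathWidth G := by
  obtain ⟨D, hD⟩ := PathDecomp.exists_width_eq G
  obtain ⟨b, hb⟩ := exists_equiv_monotone_comp D.firstBag
  calc bubbleWidth G ≤ ordWidth G b := bubbleWidth_le G b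
    _ ≤ D.width * d := D.ordWidth_le hdeg hb
    _ = d * pathWidth G := by rw [hD, mul_comm]

section ConsecutiveBags

variable {V : Type*}

/-- The bags of `L` containing any given vertex are consecutive. -/
def HasConsecutiveBags (L : List (Set V)) : Prop :=
  ∀ (v : V) (a b c : ℕ), a ≤ b → b ≤ c → v ∈ L.getD a ∅ → v ∈ L.getD c ∅ → v ∈ L.getD b ∅

lemma lt_length_of_mem_getD {L : List (Set V)} {a : ℕ} {v : V} (h : v ∈ L.getD a ∅) :
    a < L.length := by
  by_contra! ha
  rwa [List.getD_eq_default _ _ ha] at h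

lemma getD_mem {L : List (Set V)} {a : ℕ} (h : a < L.length) : L.getD a ∅ ∈ L := by
  rw [List.getD_eq_getElem _ _ h]
  exact List.getElem_mem h

lemma hasConsecutiveBags_of_length_le_one {L : List (Set V)} (h : L.length ≤ 1) :
    HasConsecutiveBags L := by
  intro v a b c hab hbc ha hc
  have := lt_length_of_mem_getD hc
  rwa [show b = a by omega]

lemma HasConsecutiveBags.map_union {L : List (Set V)} (h : HasConsecutiveBags L) (A : Set V) :
    HasConsecutiveBags (L.map (· ∪ A)) := by
  have hget : ∀ i, (L.map (· ∪ A)).getD i ∅ = if i < L.length then L.getD i ∅ ∪ A else ∅ := by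
    intro i
    split_ifs with hi
    · rw [List.getD_eq_getElem _ _ (by simpa using hi), List.getD_eq_getElem _ _ hi,
        List.getElem_map]
    · exact List.getD_eq_default _ _ (by simpa using hi)
  intro v a b c hab hbc ha hc
  have hcl := lt_length_of_mem_getD hc
  rw [List.length_map] at hcl
  rw [hget, if_pos (by omega)] at ha ⊢
  rw [hget, if_pos hcl] at hc
  by_cases hv : v ∈ A
  · exact Or.inr hv
  · exact Or.inl (h v a b c hab hbc (ha.resolve_right hv) (hc.resolve_right hv))

lemma HasConsecutiveBags.append {L₁ L₂ : List (Set V)} {A : Set V} (h₁ : HasConsecutiveBags L₁)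
    (h₂ : HasConsecutiveBags L₂) (hA₁ : ∀ B ∈ L₁, A ⊆ B) (hA₂ : ∀ B ∈ L₂, A ⊆ B)
    (hcross : ∀ B₁ ∈ L₁, ∀ B₂ ∈ L₂, B₁ ∩ B₂ ⊆ A) : HasConsecutiveBags (L₁ ++ L₂) := by
  intro v a b c hab hbc ha hc
  set n := L₁.length
  by_cases hcn : c < n
  · rw [List.getD_append _ _ _ _ (by omega)] at ha hc ⊢
    exact h₁ v a b c hab hbc ha hc
  by_cases han : n ≤ a
  · rw [List.getD_append_right _ _ _ _ (by omega)] at ha hc ⊢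
    exact h₂ v (a - n) (b - n) (c - n) (by omega) (by omega) ha hc
  rw [List.getD_append _ _ _ _ (by omega)] at ha
  rw [List.getD_append_right _ _ _ _ (by omega)] at hc
  have hvA : v ∈ A :=
    hcross _ (getD_mem (by omega)) _ (getD_mem (lt_length_of_mem_getD hc)) ⟨ha, hc⟩
  by_cases hbn : b < n
  · rw [List.getD_append _ _ _ _ hbn]
    exact hA₁ _ (getD_mem hbn) hvA
  · rw [List.getD_append_right _ _ _ _ (by omega)]
    exact hA₂ _ (getD_mem (by have := lt_length_of_mem_getD hc; omega)) hvA

lemma hasConsecutiveBags_flatten {Ls : List (List (Set V))} {A : Set V}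
    (h : ∀ L ∈ Ls, HasConsecutiveBags L) (hA : ∀ L ∈ Ls, ∀ B ∈ L, A ⊆ B)
    (hcross : Ls.Pairwise fun L L' => ∀ B ∈ L, ∀ B' ∈ L', B ∩ B' ⊆ A) :
    HasConsecutiveBags Ls.flatten := by
  induction Ls with
  | nil => exact hasConsecutiveBags_of_length_le_one (by simp)
  | cons L Ls ih =>
    rw [List.pairwise_cons] at hcross
    rw [List.flatten_cons]
    refine (h L List.mem_cons_self).append
      (ih (fun L' hL' => h L' (List.mem_cons_of_mem _ hL'))
        (fun L' hL' => hA L' (List.mem_cons_of_mem _ hL')) hcross.2)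
      (hA L List.mem_cons_self) ?_ ?_
    · intro B hB
      obtain ⟨L', hL', hB⟩ := List.mem_flatten.1 hB
      exact hA L' (List.mem_cons_of_mem _ hL') B hB
    · intro B hB B' hB'
      obtain ⟨L', hL', hB'⟩ := List.mem_flatten.1 hB'
      exact hcross.1 L' hL' B hB B' hB'

end ConsecutiveBags

section PathDecompOn

variable {V : Type*} {G : SimpleGraph V}

/-- `L` is a path decomposition of the subgraph induced on `S`, every vertex of `S` in a bag. -/
structure IsPathDecompOn (G : SimpleGraph V) (S : Set V) (L : List (Set V)) : Prop where
  subset : ∀ B ∈ L, B ⊆ S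
  mem : ∀ v ∈ S, ∃ B ∈ L, v ∈ B
  cover : ∀ ⦃u v⦄, u ∈ S → v ∈ S → G.Adj u v → ∃ B ∈ L, u ∈ B ∧ v ∈ B
  consecutive : HasConsecutiveBags L

lemma isPathDecompOn_empty : IsPathDecompOn G ∅ [] :=
  ⟨by simp, by simp, by simp, hasConsecutiveBags_of_length_le_one (by simp)⟩

def glueBags {k : ℕ} (A : Set V) (F : Fin k → List (Set V)) : List (Set V) :=
  ([A] :: List.ofFn fun y => (F y).map (· ∪ A)).flatten

lemma mem_glueBags {k : ℕ} {A B : Set V} {F : Fin k → List (Set V)} :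
    B ∈ glueBags A F ↔ B = A ∨ ∃ y, ∃ B₀ ∈ F y, B = B₀ ∪ A := by
  simp [glueBags, eq_comm]

lemma ncard_le_of_mem_glueBags {k w : ℕ} {A B : Set V} {F : Fin k → List (Set V)}
    (hF : ∀ y, ∀ B₀ ∈ F y, B₀.ncard ≤ w) (hB : B ∈ glueBags A F) : B.ncard ≤ w + A.ncard := by
  rcases mem_glueBags.1 hB with rfl | ⟨y, B₀, hB₀, rfl⟩
  · exact Nat.le_add_left _ _
  · exact (Set.ncard_union_le _ _).trans (Nat.add_le_add_right (hF y B₀ hB₀) _)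

lemma hasConsecutiveBags_glueBags {k : ℕ} {A : Set V} {P : Fin k → Set V}
    {F : Fin k → List (Set V)} (hF : ∀ y, IsPathDecompOn G (P y) (F y))
    (hP : Pairwise fun y y' => Disjoint (P y) (P y')) : HasConsecutiveBags (glueBags A F) := by
  refine hasConsecutiveBags_flatten (A := A) ?_ ?_ ?_
  · simp only [List.mem_cons, List.mem_ofFn]
    rintro L (rfl | ⟨y, rfl⟩)
    exacts [hasConsecutiveBags_of_length_le_one (by simp), (hF y).consecutive.map_union A]
  · simp only [List.mem_cons, List.mem_ofFn]
    rintro L (rfl | ⟨y, rfl⟩) B hB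
    · rw [List.mem_singleton.1 hB]
    · obtain ⟨B₀, -, rfl⟩ := List.mem_map.1 hB
      exact Set.subset_union_right
  · refine List.pairwise_cons.2 ⟨?_, List.pairwise_ofFn.2 fun y y' hyy' => ?_⟩
    · intro L _ B hB B' _
      rw [List.mem_singleton.1 hB]
      exact Set.inter_subset_left
    · simp only [List.mem_map]
      rintro _ ⟨B, hB, rfl⟩ _ ⟨B', hB', rfl⟩ v ⟨hv | hv, hv' | hv'⟩
      · exact absurd ((hF y').subset B' hB' hv')
          (Set.disjoint_left.1 (hP hyy'.ne) ((hF y).subset B hB hv))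
      all_goals assumption

lemma isPathDecompOn_glueBags {k : ℕ} {S A : Set V} {P : Fin k → Set V}
    {F : Fin k → List (Set V)} (hF : ∀ y, IsPathDecompOn G (P y) (F y))
    (hP : Pairwise fun y y' => Disjoint (P y) (P y')) (hA : A ⊆ S) (hPS : ∀ y, P y ⊆ S)
    (hmem : ∀ v ∈ S, v ∉ A → ∃ y, v ∈ P y)
    (hcover : ∀ ⦃u v⦄, u ∈ S → v ∈ S → G.Adj u v → u ∉ A → v ∉ A → ∃ y, u ∈ P y ∧ v ∈ P y) :
    IsPathDecompOn G S (glueBags A F) := by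
  have hA_mem : A ∈ glueBags A F := mem_glueBags.2 (Or.inl rfl)
  have hF_mem : ∀ y, ∀ B₀ ∈ F y, B₀ ∪ A ∈ glueBags A F := fun y B₀ hB₀ =>
    mem_glueBags.2 (Or.inr ⟨y, B₀, hB₀, rfl⟩)
  have hmem' : ∀ v ∈ S, v ∉ A → ∃ y, ∃ B₀ ∈ F y, v ∈ B₀ := fun v hv hvA =>
    let ⟨y, hy⟩ := hmem v hv hvA
    ⟨y, (hF y).mem v hy⟩
  refine ⟨fun B hB => ?_, fun v hv => ?_, fun u v hu hv huv => ?_,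
    hasConsecutiveBags_glueBags hF hP⟩
  · rcases mem_glueBags.1 hB with rfl | ⟨y, B₀, hB₀, rfl⟩
    exacts [hA, Set.union_subset (((hF y).subset B₀ hB₀).trans (hPS y)) hA]
  · by_cases hvA : v ∈ A
    · exact ⟨A, hA_mem, hvA⟩
    · obtain ⟨y, B₀, hB₀, hvB₀⟩ := hmem' v hv hvA
      exact ⟨_, hF_mem y B₀ hB₀, Or.inl hvB₀⟩
  · by_cases huA : u ∈ A <;> by_cases hvA : v ∈ A
    · exact ⟨A, hA_mem, huA, hvA⟩
    · obtain ⟨y, B₀, hB₀, hvB₀⟩ := hmem' v hv hvA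
      exact ⟨_, hF_mem y B₀ hB₀, Or.inr huA, Or.inl hvB₀⟩
    · obtain ⟨y, B₀, hB₀, huB₀⟩ := hmem' u hu huA
      exact ⟨_, hF_mem y B₀ hB₀, Or.inl huB₀, Or.inr hvA⟩
    · obtain ⟨y, huy, hvy⟩ := hcover hu hv huv huA hvA
      obtain ⟨B₀, hB₀, huB₀, hvB₀⟩ := (hF y).cover huy hvy huv
      exact ⟨_, hF_mem y B₀ hB₀, Or.inl huB₀, Or.inl hvB₀⟩

namespace PathDecomp

def ofList (L : List (Set V)) (hcover : ∀ ⦃u v⦄, G.Adj u v → ∃ B ∈ L, u ∈ B ∧ v ∈ B)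
    (hL : HasConsecutiveBags L) : PathDecomp G where
  m := L.length
  bag i := L[i]
  cover u v h := by
    obtain ⟨B, hB, hu, hv⟩ := hcover h
    obtain ⟨i, hi, rfl⟩ := List.getElem_of_mem hB
    exact ⟨⟨i, hi⟩, hu, hv⟩
  interval v i j k hij hjk hi hk := by
    have := hL v i j k hij hjk (by rwa [List.getD_eq_getElem _ _ i.2])
      (by rwa [List.getD_eq_getElem _ _ k.2])
    rwa [List.getD_eq_getElem _ _ j.2] at this

lemma width_ofList_le {L : List (Set V)} {hcover : ∀ ⦃u v⦄, G.Adj u v → ∃ B ∈ L, u ∈ B ∧ v ∈ B}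
    {hL : HasConsecutiveBags L} {k : ℕ} (h : ∀ B ∈ L, B.ncard ≤ k) :
    (ofList L hcover hL).width ≤ k :=
  (width_le_iff _).2 fun _ => h _ (List.getElem_mem _)

end PathDecomp

end PathDecompOn

lemma log_two_two_mul {n : ℕ} (hn : n ≠ 0) : Nat.log 2 (2 * n) = Nat.log 2 n + 1 := by
  rw [mul_comm, Nat.log_mul_base one_lt_two hn]

namespace TreeDecomp

variable {V : Type*} {G : SimpleGraph V} (D : TreeDecomp G)

lemma mem_branch_of_mem_bag {v : V} {c t t' y : Fin D.m} (hc : v ∉ D.bag c) (ht : v ∈ D.bag t)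
    (ht' : v ∈ D.bag t') (hy : t ∈ D.T.branch c y) : t' ∈ D.T.branch c y := by
  by_contra h
  obtain ⟨p, hp, -⟩ := D.isTree.connected.exists_path_of_dist t t'
  exact hc (D.pathCond v t t' p hp ht ht' c (D.isTree.mem_support_of_mem_branch p hy h))

def branchPart (S : Set V) (c y : Fin D.m) : Set V :=
  {v ∈ S | v ∉ D.bag c ∧ ∃ t ∈ D.T.branch c y, v ∈ D.bag t}

lemma disjoint_branchPart {S : Set V} {c y y' : Fin D.m} (h : y ≠ y') :
    Disjoint (D.branchPart S c y) (D.branchPart S c y') :=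
  Set.disjoint_left.2 fun _ ⟨_, hvc, _, ht, hvt⟩ ⟨_, _, _, ht', hvt'⟩ =>
    h (D.isTree.eq_of_mem_branch ht (D.mem_branch_of_mem_bag hvc hvt' hvt ht'))

lemma exists_centroid_branchPart [Fintype V] (S : Set V) :
    ∃ c, ∀ y, 2 * (D.branchPart S c y).ncard ≤ S.ncard := by
  classical
  have : Nonempty (Fin D.m) := D.isTree.connected.nonempty
  let home : V → Fin D.m := fun v => Classical.epsilon fun t => v ∈ D.bag t
  obtain ⟨c, hc⟩ := D.isTree.exists_centroid S.toFinset home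
  refine ⟨c, fun y => le_trans (Nat.mul_le_mul_left 2 ?_)
    ((hc y).trans_eq (Set.ncard_eq_toFinset_card' S).symm)⟩
  rw [← Set.ncard_coe_finset]
  refine Set.ncard_le_ncard fun v ⟨hv, hvc, t, ht, hvt⟩ => ?_
  simp only [Finset.coe_filter, Set.mem_toFinset]
  exact ⟨hv, D.mem_branch_of_mem_bag hvc hvt (Classical.epsilon_spec (p := (v ∈ D.bag ·)) ⟨t, hvt⟩)
    ht⟩

theorem exists_isPathDecompOn [Fintype V] (n : ℕ) (S : Set V) (hSn : S.ncard ≤ n)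
    (hS : ∀ v ∈ S, ∃ t, v ∈ D.bag t) :
    ∃ L, IsPathDecompOn G S L ∧ ∀ B ∈ L, B.ncard ≤ D.width * Nat.log 2 (2 * n) := by
  induction n using Nat.strong_induction_on generalizing S with
  | _ n ih =>
  rcases Nat.eq_zero_or_pos n with rfl | hn
  · obtain rfl : S = ∅ := (Set.ncard_eq_zero).1 (Nat.le_zero.1 hSn)
    exact ⟨[], isPathDecompOn_empty, by simp⟩
  obtain ⟨c, hc⟩ := D.exists_centroid_branchPart S
  have hpart (y : Fin D.m) : ∃ L, IsPathDecompOn G (D.branchPart S c y) L ∧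
      ∀ B ∈ L, B.ncard ≤ D.width * Nat.log 2 (2 * (n / 2)) :=
    ih (n / 2) (Nat.div_lt_self hn one_lt_two) _ (by have := hc y; omega) fun v hv => hS v hv.1
  choose F hF hFw using hpart
  have hbranch {t : Fin D.m} {v : V} (hvt : v ∈ D.bag t) (hvc : v ∉ D.bag c) :
      ∃ y, t ∈ D.T.branch c y :=
    D.isTree.exists_mem_branch fun h => hvc (h ▸ hvt)
  refine ⟨glueBags (D.bag c ∩ S) F,
    isPathDecompOn_glueBags hF (fun _ _ h => D.disjoint_branchPart h) Set.inter_subset_right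
      (fun _ _ hv => hv.1) ?_ ?_, ?_⟩
  · intro v hv hvA
    have hvc : v ∉ D.bag c := fun h => hvA ⟨h, hv⟩
    obtain ⟨t, hvt⟩ := hS v hv
    obtain ⟨y, hy⟩ := hbranch hvt hvc
    exact ⟨y, hv, hvc, t, hy, hvt⟩
  · intro u v hu hv huv huA hvA
    have huc : u ∉ D.bag c := fun h => huA ⟨h, hu⟩
    have hvc : v ∉ D.bag c := fun h => hvA ⟨h, hv⟩
    obtain ⟨t, hut, hvt⟩ := D.cover huv
    obtain ⟨y, hy⟩ := hbranch hut huc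
    exact ⟨y, ⟨hu, huc, t, hy, hut⟩, ⟨hv, hvc, t, hy, hvt⟩⟩
  · have hlog : Nat.log 2 (2 * (n / 2)) + 1 ≤ Nat.log 2 (2 * n) := by
      rw [log_two_two_mul hn.ne']
      exact Nat.add_le_add_right (Nat.log_mono_right (by omega)) 1
    have hAw : (D.bag c ∩ S).ncard ≤ D.width :=
      (Set.ncard_le_ncard Set.inter_subset_left).trans (D.ncard_bag_le_width c)
    intro B hB
    calc B.ncard ≤ D.width * Nat.log 2 (2 * (n / 2)) + D.width :=
          (ncard_le_of_mem_glueBags hFw hB).trans (Nat.add_le_add_left hAw _)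
      _ ≤ D.width * Nat.log 2 (2 * n) := by
          rw [← mul_add_one]
          exact Nat.mul_le_mul_left _ hlog

theorem pathWidth_le_mul_log_card [Fintype V] :
    pathWidth G ≤ D.width * (Nat.log 2 (Fintype.card V) + 1) := by
  obtain ⟨L, hL, hLw⟩ := D.exists_isPathDecompOn (Fintype.card V) {v | ∃ t, v ∈ D.bag t}
    ((Set.ncard_le_card _).trans_eq Nat.card_eq_fintype_card) fun _ hv => hv
  have hcover : ∀ ⦃u v⦄, G.Adj u v → ∃ B ∈ L, u ∈ B ∧ v ∈ B := fun _ _ huv =>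
    let ⟨t, hu, hv⟩ := D.cover huv
    hL.cover ⟨t, hu⟩ ⟨t, hv⟩ huv
  have hlog : Nat.log 2 (2 * Fintype.card V) ≤ Nat.log 2 (Fintype.card V) + 1 := by
    rcases Nat.eq_zero_or_pos (Fintype.card V) with h | h
    · simp [h]
    · rw [log_two_two_mul h.ne']
  calc pathWidth G ≤ (PathDecomp.ofList L hcover hL.consecutive).width := PathDecomp.pathWidth_le _
    _ ≤ D.width * Nat.log 2 (2 * Fintype.card V) := PathDecomp.width_ofList_le hLw
    _ ≤ D.width * (Nat.log 2 (Fintype.card V) + 1) := Nat.mul_le_mul_left _ hlog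

end TreeDecomp

theorem pathWidth_le_log_mul_treeWidth {V : Type*} [Fintype V] (G : SimpleGraph V) :
    pathWidth G ≤ (Nat.log 2 (Fintype.card V) + 1) * treeWidth G := by
  obtain ⟨D, hD⟩ := TreeDecomp.exists_width_eq G
  rw [← hD, mul_comm]
  exact D.pathWidth_le_mul_log_card

/-- for finite graphs of maximum degree at most `d` on `n` vertices,
`TW(G) ≤ PW(G) ≤ 2·BW(G) ≤ 2d·PW(G) ≤ O(d·log n)·TW(G)`; in particular for
bounded-degree graphs the three parameters agree up to a factor `O(log n)`. -/
theorem treeWidth_pathWidth_bubbleWidth_equiv :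
    ∃ C : ℕ, 0 < C ∧
      ∀ (V : Type) [Fintype V] [DecidableEq V] (G : SimpleGraph V) (d : ℕ),
        (∀ v : V, (G.neighborSet v).ncard ≤ d) →
        treeWidth G ≤ pathWidth G ∧
        pathWidth G ≤ 2 * bubbleWidth G ∧
        2 * bubbleWidth G ≤ 2 * d * pathWidth G ∧
        2 * d * pathWidth G ≤
          C * d * (Nat.log 2 (Fintype.card V) + 1) * treeWidth G := by
  refine ⟨2, two_pos, fun V _ _ G d hdeg => ⟨treeWidth_le_pathWidth G,
    pathWidth_le_two_mul_bubbleWidth G, ?_, ?_⟩⟩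
  · rw [mul_assoc]
    exact Nat.mul_le_mul_left 2 (bubbleWidth_le_mul_pathWidth G hdeg)
  · calc 2 * d * pathWidth G
        ≤ 2 * d * ((Nat.log 2 (Fintype.card V) + 1) * treeWidth G) :=
          Nat.mul_le_mul_left _ (pathWidth_le_log_mul_treeWidth G)
      _ = 2 * d * (Nat.log 2 (Fintype.card V) + 1) * treeWidth G := (mul_assoc _ _ _).symm
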